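/- In the K-patch vertex setting, there exists a linear operator P_v : V_pw → V_pw such that for every φ = (φ₁,…,φ_K) ∈ V_pw: (0) (P_vφ)_k(0,0) = (1/K) Σ_{k'=1}^{K} φ_{k'}(0,0) for every k, so in particular P_vφ is continuous at the vertex; (1) P_vφ = φ if and only if φ is continuous at the vertex; and (2) P_v preserves patchwise polynomial moments of order r, i.e. for every k and all q₁, q₂ ∈ Q one has ∫_{[0,1]²} (P_vφ)_k(x,y) q₁(x) q₂(y) dx dy = ∫_{[0,1]²} φ_k(x,y) q₁(x) q₂(y) dx dy. -/
import Mathlib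


noncomputable section

/-- The `L²(0,1)` pairing `⟨f, g⟩ = ∫₀¹ f g`. -/
def l2ip (f g : ℝ → ℝ) : ℝ := ∫ x in (0:ℝ)..1, f x * g x

/-- Real polynomial functions of degree at most `r - 1`. -/
def polyDegLT (r : ℕ) : Set (ℝ → ℝ) :=
  {f | ∃ p : Polynomial ℝ, p.degree < (r : WithBot ℕ) ∧ f = fun x => p.eval x}

/-- Tensor-product span of the functions `(x, y) ↦ λᵢ(x) λⱼ(y)`. -/
def tensorSpan {n : ℕ} (lam : Fin (n + 1) → ℝ → ℝ) : Submodule ℝ (ℝ → ℝ → ℝ) :=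
  Submodule.span ℝ {f | ∃ i j, f = fun x y => lam i x * lam j y}

/-- The moment `∫_{[0,1]²} f(x,y) q₁(x) q₂(y) dx dy`. -/
def mom2 (f : ℝ → ℝ → ℝ) (q₁ q₂ : ℝ → ℝ) : ℝ :=
  ∫ x in (0:ℝ)..1, ∫ y in (0:ℝ)..1, f x y * q₁ x * q₂ y

open Set MeasureTheory

lemma uIcc01 : Set.uIcc (0:ℝ) 1 = Set.Icc 0 1 := Set.uIcc_of_le zero_le_one

lemma poly_cont {r : ℕ} {q : ℝ → ℝ} (hq : q ∈ polyDegLT r) : Continuous q := by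
  obtain ⟨p, -, rfl⟩ := hq
  exact p.continuous

lemma span_contOn {S : Set (ℝ → ℝ)} (hS : ∀ f ∈ S, ContinuousOn f (Set.Icc (0:ℝ) 1))
    {f : ℝ → ℝ} (hf : f ∈ Submodule.span ℝ S) : ContinuousOn f (Set.Icc (0:ℝ) 1) := by
  induction hf using Submodule.span_induction with
  | mem x hx => exact hS x hx
  | zero => exact continuousOn_const
  | add x y hx hy ihx ihy => exact ihx.add ihy
  | smul a x hx ih => exact ih.const_smul a

lemma tensor_mem {n : ℕ} (lam : Fin (n+1) → ℝ → ℝ) {g1 g2 : ℝ → ℝ}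
    (h1 : g1 ∈ Submodule.span ℝ (Set.range lam))
    (h2 : g2 ∈ Submodule.span ℝ (Set.range lam)) :
    (fun x y => g1 x * g2 y) ∈ tensorSpan lam := by
  induction h1 using Submodule.span_induction with
  | mem u hu =>
      obtain ⟨i, rfl⟩ := hu
      induction h2 using Submodule.span_induction with
      | mem v hv => obtain ⟨j, rfl⟩ := hv; exact Submodule.subset_span ⟨i, j, rfl⟩
      | zero =>
          have : (fun x y => lam i x * (0 : ℝ → ℝ) y) = 0 := by funext x y; simp
          rw [this]; exact zero_mem _
      | add a b ha hb iha ihb =>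
          have : (fun x y => lam i x * (a + b) y)
              = (fun x y => lam i x * a y) + fun x y => lam i x * b y := by
            funext x y; simp [mul_add]
          rw [this]; exact add_mem iha ihb
      | smul c a ha iha =>
          have : (fun x y => lam i x * (c • a) y) = c • fun x y => lam i x * a y := by
            funext x y; simp [smul_eq_mul]; ring
          rw [this]; exact Submodule.smul_mem _ c iha
  | zero =>
      have : (fun x y => (0 : ℝ → ℝ) x * g2 y) = 0 := by funext x y; simp
      rw [this]; exact zero_mem _
  | add a b ha hb iha ihb =>
      have : (fun x y => (a + b) x * g2 y)
          = (fun x y => a x * g2 y) + fun x y => b x * g2 y := by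
        funext x y; simp [add_mul]
      rw [this]; exact add_mem iha ihb
  | smul c a ha iha =>
      have : (fun x y => (c • a) x * g2 y) = c • fun x y => a x * g2 y := by
        funext x y; simp [smul_eq_mul]; ring
      rw [this]; exact Submodule.smul_mem _ c iha

lemma contOn_II {E : Type*} [NormedAddCommGroup E] {f : ℝ → E}
    (h : ContinuousOn f (Set.Icc (0:ℝ) 1)) : IntervalIntegrable f MeasureTheory.volume 0 1 :=
  ContinuousOn.intervalIntegrable (by rwa [uIcc01])

lemma slice_cont {q1 q2 : ℝ → ℝ} (hq2 : Continuous q2) {f : ℝ → ℝ → ℝ}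
    (hf : ContinuousOn (fun p : ℝ × ℝ => f p.1 p.2) (Set.Icc (0:ℝ) 1 ×ˢ Set.Icc (0:ℝ) 1))
    {x : ℝ} (hx : x ∈ Set.Icc (0:ℝ) 1) :
    ContinuousOn (fun y => f x y * q1 x * q2 y) (Set.Icc (0:ℝ) 1) := by
  have h1 : ContinuousOn (fun y => f x y) (Set.Icc (0:ℝ) 1) :=
    hf.comp ((continuous_const.prodMk continuous_id).continuousOn) fun y hy => ⟨hx, hy⟩
  exact (h1.mul continuousOn_const).mul hq2.continuousOn

lemma tensorSpan_nice {n : ℕ} {lam : Fin (n+1) → ℝ → ℝ}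
    (hc : ∀ i, ContinuousOn (lam i) (Set.Icc (0:ℝ) 1))
    {q1 q2 : ℝ → ℝ} (hq1 : Continuous q1) (hq2 : Continuous q2)
    {f : ℝ → ℝ → ℝ} (hf : f ∈ tensorSpan lam) :
    ContinuousOn (fun p : ℝ × ℝ => f p.1 p.2) (Set.Icc (0:ℝ) 1 ×ˢ Set.Icc (0:ℝ) 1) ∧
    ContinuousOn (fun x => ∫ y in (0:ℝ)..1, f x y * q1 x * q2 y) (Set.Icc (0:ℝ) 1) := by
  induction hf using Submodule.span_induction with
  | mem g hg =>
      obtain ⟨i, j, rfl⟩ := hg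
      constructor
      · exact ((hc i).comp continuousOn_fst fun p hp => hp.1).mul
          ((hc j).comp continuousOn_snd fun p hp => hp.2)
      · have key : ∀ x, (∫ y in (0:ℝ)..1, lam i x * lam j y * q1 x * q2 y)
            = (lam i x * q1 x) * ∫ y in (0:ℝ)..1, lam j y * q2 y := by
          intro x
          rw [← intervalIntegral.integral_const_mul]
          apply intervalIntegral.integral_congr
          intro y _
          ring
        simp only [key]
        exact ((hc i).mul hq1.continuousOn).mul continuousOn_const
  | zero => refine ⟨continuousOn_const, ?_⟩; simp [continuousOn_const]
  | add a b ha hb iha ihb =>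
      obtain ⟨ha1, ha2⟩ := iha
      obtain ⟨hb1, hb2⟩ := ihb
      refine ⟨ha1.add hb1, ?_⟩
      refine (ha2.add hb2).congr fun x hx => ?_
      have hay := contOn_II (slice_cont (q1 := q1) hq2 ha1 hx)
      have hby := contOn_II (slice_cont (q1 := q1) hq2 hb1 hx)
      calc (∫ y in (0:ℝ)..1, (a + b) x y * q1 x * q2 y)
          = ∫ y in (0:ℝ)..1, (a x y * q1 x * q2 y + b x y * q1 x * q2 y) := by
            apply intervalIntegral.integral_congr; intro y _
            show (a x y + b x y) * q1 x * q2 y = _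
            ring
        _ = _ := intervalIntegral.integral_add hay hby
  | smul c a ha iha =>
      obtain ⟨ha1, ha2⟩ := iha
      refine ⟨ha1.const_smul c, ?_⟩
      refine (ha2.const_smul c).congr fun x hx => ?_
      show (∫ y in (0:ℝ)..1, (c • a) x y * q1 x * q2 y)
          = c • ∫ y in (0:ℝ)..1, a x y * q1 x * q2 y
      rw [smul_eq_mul, ← intervalIntegral.integral_const_mul]
      apply intervalIntegral.integral_congr; intro y _
      show c * a x y * q1 x * q2 y = c * (a x y * q1 x * q2 y)
      ring

lemma mom2_special {q1 q2 : ℝ → ℝ} (hq1 : Continuous q1) (hq2 : Continuous q2)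
    {f : ℝ → ℝ → ℝ}
    (hf1 : ContinuousOn (fun p : ℝ × ℝ => f p.1 p.2) (Set.Icc (0:ℝ) 1 ×ˢ Set.Icc (0:ℝ) 1))
    (hf2 : ContinuousOn (fun x => ∫ y in (0:ℝ)..1, f x y * q1 x * q2 y) (Set.Icc (0:ℝ) 1))
    {g : ℝ → ℝ} (hg : ContinuousOn g (Set.Icc (0:ℝ) 1)) (t : ℝ) :
    mom2 (fun x y => f x y + t * (g x * g y)) q1 q2
      = mom2 f q1 q2 + t * (l2ip g q1 * l2ip g q2) := by
  unfold mom2 l2ip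
  have step1 : Set.EqOn
      (fun x => ∫ y in (0:ℝ)..1, (f x y + t * (g x * g y)) * q1 x * q2 y)
      (fun x => (∫ y in (0:ℝ)..1, f x y * q1 x * q2 y)
        + (t * g x * q1 x) * ∫ y in (0:ℝ)..1, g y * q2 y) (Set.uIcc (0:ℝ) 1) := by
    intro x hx
    rw [uIcc01] at hx
    have h1 := contOn_II (slice_cont (q1 := q1) hq2 hf1 hx)
    have h2 : IntervalIntegrable (fun y => (t * g x * q1 x) * (g y * q2 y)) volume 0 1 :=
      contOn_II (continuousOn_const.mul (hg.mul hq2.continuousOn))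
    calc (∫ y in (0:ℝ)..1, (f x y + t * (g x * g y)) * q1 x * q2 y)
        = ∫ y in (0:ℝ)..1, (f x y * q1 x * q2 y + (t * g x * q1 x) * (g y * q2 y)) := by
          apply intervalIntegral.integral_congr; intro y _; ring
      _ = (∫ y in (0:ℝ)..1, f x y * q1 x * q2 y)
            + ∫ y in (0:ℝ)..1, (t * g x * q1 x) * (g y * q2 y) :=
          intervalIntegral.integral_add h1 h2
      _ = _ := by rw [intervalIntegral.integral_const_mul]
  rw [intervalIntegral.integral_congr step1]
  have hA : IntervalIntegrable (fun x => ∫ y in (0:ℝ)..1, f x y * q1 x * q2 y) volume 0 1 :=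
    contOn_II hf2
  have hB : IntervalIntegrable
      (fun x => (t * g x * q1 x) * ∫ y in (0:ℝ)..1, g y * q2 y) volume 0 1 :=
    contOn_II (((continuousOn_const.mul hg).mul hq1.continuousOn).mul continuousOn_const)
  rw [intervalIntegral.integral_add hA hB]
  congr 1
  have : (∫ x in (0:ℝ)..1, (t * g x * q1 x) * ∫ y in (0:ℝ)..1, g y * q2 y)
      = ∫ x in (0:ℝ)..1, (t * ∫ y in (0:ℝ)..1, g y * q2 y) * (g x * q1 x) := by
    apply intervalIntegral.integral_congr; intro x _; ring
  rw [this, intervalIntegral.integral_const_mul]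
  ring

set_option maxHeartbeats 1000000 in
/-- Proposition 3.1 of the paper, K-patch vertex setting: there exists a
local vertex-conforming operator `P_v` on the broken space of K-tuples which averages the
vertex values (hence produces tuples continuous at the vertex), fixes exactly the tuples
continuous at the vertex, and preserves the patchwise polynomial moments of order `r`. -/
theorem stmt5
    (K : ℕ) (hK : 1 ≤ K)
    (n : Fin K → ℕ)
    (lam : ∀ k : Fin K, Fin (n k + 1) → ℝ → ℝ)
    (hc : ∀ k i, ContinuousOn (lam k i) (Set.Icc (0:ℝ) 1))
    (hli : ∀ k, LinearIndependent ℝ (lam k))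
    (h0 : ∀ k i, lam k i 0 = if i = 0 then 1 else 0)
    (r : ℕ)
    -- interior splines μᵏ matching the moments of the vertex basis functions λᵏ₀
    (hmu : ∀ k, ∃ μ ∈ Submodule.span ℝ (Set.range (lam k)), μ 0 = 0 ∧
      ∀ q ∈ polyDegLT r, l2ip μ q = l2ip (lam k 0) q) :
    ∃ P : ↥(Submodule.pi Set.univ fun k => tensorSpan (lam k)) →ₗ[ℝ]
          ↥(Submodule.pi Set.univ fun k => tensorSpan (lam k)),
      -- (0) the vertex value of the projection is the average of the vertex values
      (∀ φ : ↥(Submodule.pi Set.univ fun k => tensorSpan (lam k)), ∀ k : Fin K,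
        ((P φ : Fin K → ℝ → ℝ → ℝ) k) 0 0 =
          (K : ℝ)⁻¹ * ∑ k' : Fin K, ((φ : Fin K → ℝ → ℝ → ℝ) k') 0 0) ∧
      -- (1) P φ = φ iff φ is continuous at the vertex
      (∀ φ : ↥(Submodule.pi Set.univ fun k => tensorSpan (lam k)),
        P φ = φ ↔ ∀ k k' : Fin K,
          ((φ : Fin K → ℝ → ℝ → ℝ) k) 0 0 = ((φ : Fin K → ℝ → ℝ → ℝ) k') 0 0) ∧
      -- (2) preservation of patchwise polynomial moments of order r
      (∀ φ : ↥(Submodule.pi Set.univ fun k => tensorSpan (lam k)), ∀ k : Fin K,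
        ∀ q₁ ∈ polyDegLT r, ∀ q₂ ∈ polyDegLT r,
          mom2 ((P φ : Fin K → ℝ → ℝ → ℝ) k) q₁ q₂ =
            mom2 ((φ : Fin K → ℝ → ℝ → ℝ) k) q₁ q₂) := by
  classical
  choose μ hμmem hμ0 hμq using hmu
  set V := Submodule.pi Set.univ fun k => tensorSpan (lam k) with hV
  -- the bubble functions
  set g : Fin K → ℝ → ℝ := fun k x => lam k 0 x - μ k x with hg
  have hg0 : ∀ k, g k 0 = 1 := by
    intro k; simp [hg, hμ0 k, h0 k 0]
  have hgmem : ∀ k, g k ∈ Submodule.span ℝ (Set.range (lam k)) := by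
    intro k
    exact Submodule.sub_mem _ (Submodule.subset_span ⟨0, rfl⟩) (hμmem k)
  have hμcont : ∀ k, ContinuousOn (μ k) (Set.Icc (0:ℝ) 1) := by
    intro k
    exact span_contOn (fun f hf => by obtain ⟨i, rfl⟩ := hf; exact hc k i) (hμmem k)
  have hgcont : ∀ k, ContinuousOn (g k) (Set.Icc (0:ℝ) 1) := fun k => (hc k 0).sub (hμcont k)
  have hgip : ∀ k, ∀ q ∈ polyDegLT r, l2ip (g k) q = 0 := by
    intro k q hq
    have hqc := poly_cont hq
    have h1 : IntervalIntegrable (fun x => lam k 0 x * q x) MeasureTheory.volume 0 1 :=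
      contOn_II ((hc k 0).mul hqc.continuousOn)
    have h2 : IntervalIntegrable (fun x => μ k x * q x) MeasureTheory.volume 0 1 :=
      contOn_II ((hμcont k).mul hqc.continuousOn)
    have : l2ip (g k) q = l2ip (lam k 0) q - l2ip (μ k) q := by
      unfold l2ip
      rw [← intervalIntegral.integral_sub h1 h2]
      apply intervalIntegral.integral_congr
      intro x _
      show (lam k 0 x - μ k x) * q x = lam k 0 x * q x - μ k x * q x
      ring
    rw [this, hμq k q hq, sub_self]
  -- the tensor bubbles
  set c : Fin K → ℝ → ℝ → ℝ := fun k x y => g k x * g k y with hcdef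
  have hcmem : ∀ k, c k ∈ tensorSpan (lam k) := fun k => tensor_mem _ (hgmem k) (hgmem k)
  -- vertex average
  set avg : (Fin K → ℝ → ℝ → ℝ) → ℝ := fun ψ => (K : ℝ)⁻¹ * ∑ k' : Fin K, ψ k' 0 0 with havg
  -- the projection, defined componentwise
  set F : ↥V → Fin K → ℝ → ℝ → ℝ :=
    fun φ k x y => φ.1 k x y + (avg φ.1 - φ.1 k 0 0) * (g k x * g k y) with hF
  have hFeq : ∀ (φ : ↥V) (k : Fin K), F φ k = φ.1 k + (avg φ.1 - φ.1 k 0 0) • c k := by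
    intro φ k; funext x y; rfl
  have hFmem : ∀ (φ : ↥V) (k : Fin K), F φ k ∈ tensorSpan (lam k) := by
    intro φ k
    rw [hFeq]
    exact add_mem ((Submodule.mem_pi.mp φ.2) k (Set.mem_univ k))
      (Submodule.smul_mem _ _ (hcmem k))
  refine ⟨⟨⟨fun φ => ⟨F φ, by rw [Submodule.mem_pi]; exact fun k _ => hFmem φ k⟩, ?_⟩, ?_⟩,
    ?_, ?_, ?_⟩
  · -- additivity
    intro φ ψ
    apply Subtype.ext
    rw [Submodule.coe_add]
    show F (φ + ψ) = F φ + F ψ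
    have ha : avg (↑φ + ↑ψ : Fin K → ℝ → ℝ → ℝ) = avg ↑φ + avg ↑ψ := by
      simp [havg, Pi.add_apply, Finset.sum_add_distrib]
      ring
    funext k x y
    simp only [hF, Pi.add_apply, Submodule.coe_add, ha]
    ring
  · -- homogeneity
    intro t φ
    apply Subtype.ext
    rw [RingHom.id_apply, Submodule.coe_smul]
    show F (t • φ) = t • F φ
    have ha : avg (t • (↑φ : Fin K → ℝ → ℝ → ℝ)) = t * avg ↑φ := by
      simp only [havg, Pi.smul_apply, smul_eq_mul]
      rw [← Finset.mul_sum]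
      ring
    funext k x y
    simp only [hF, Pi.smul_apply, Submodule.coe_smul, smul_eq_mul, ha]
    ring
  · -- property 0
    intro φ k
    show F φ k 0 0 = avg φ.1
    simp only [hF, hg0 k]
    ring
  · -- property 1
    intro φ
    constructor
    · intro hP k k'
      have hval : ∀ j : Fin K, avg φ.1 = φ.1 j 0 0 := by
        intro j
        have h1 : F φ j 0 0 = φ.1 j 0 0 :=
          congrFun (congrFun (congrFun (congrArg Subtype.val hP) j) 0) 0
        simp only [hF, hg0 j] at h1
        nlinarith [h1]
      rw [← hval k, ← hval k']
    · intro hcont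
      apply Subtype.ext
      show F φ = φ.1
      have hval : ∀ j : Fin K, avg φ.1 = φ.1 j 0 0 := by
        intro j
        have hsum : ∑ k' : Fin K, φ.1 k' 0 0 = K * φ.1 j 0 0 := by
          rw [Finset.sum_congr rfl fun k' _ => hcont k' j]
          simp [Finset.card_univ]
        have hKne : (K : ℝ) ≠ 0 := by positivity
        simp only [havg, hsum]
        field_simp
      funext k x y
      simp only [hF, hval k]
      ring
  · -- property 2
    intro φ k q1 hq1 q2 hq2
    have hq1c := poly_cont hq1
    have hq2c := poly_cont hq2
    have hmem : φ.1 k ∈ tensorSpan (lam k) := (Submodule.mem_pi.mp φ.2) k (Set.mem_univ k)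
    obtain ⟨hn1, hn2⟩ := tensorSpan_nice (hc k) hq1c hq2c hmem
    show mom2 (F φ k) q1 q2 = mom2 (φ.1 k) q1 q2
    have : mom2 (F φ k) q1 q2
        = mom2 (φ.1 k) q1 q2 + (avg φ.1 - φ.1 k 0 0) * (l2ip (g k) q1 * l2ip (g k) q2) :=
      mom2_special hq1c hq2c hn1 hn2 (hgcont k) _
    rw [this, hgip k q1 hq1, hgip k q2 hq2]
    ring

end
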